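/- arXiv:1307.8003 — 3 statements merged into one kernel-verified Lean document; each statement's English description precedes it below -/
import Mathlib

section
/- For any three 2×2 matrices A, B, C over a commutative ring R, the following trace identity holds: tr(A)·tr(B)·tr(C) + tr(ABC) + tr(ACB) − tr(A)·tr(BC) − tr(B)·tr(AC) − tr(C)·tr(AB) = 0. -/
open Matrix

/-- The fundamental trace identity for 2×2 matrices over a commutative ring:
`tr A · tr B · tr C + tr(ABC) + tr(ACB) − tr A · tr(BC) − tr B · tr(AC) − tr C · tr(AB) = 0`. -/
theorem trace_identity_two_dim {R : Type*} [CommRing R]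
    (A B C : Matrix (Fin 2) (Fin 2) R) :
    A.trace * B.trace * C.trace + (A * B * C).trace + (A * C * B).trace
      - A.trace * (B * C).trace - B.trace * (A * C).trace - C.trace * (A * B).trace = 0 := by
  simp only [Matrix.trace, Matrix.diag, Matrix.mul_apply, Fin.sum_univ_two]
  ring
end

section
/- Let R be a commutative ring, A = R[x,y], and m, N positive integers. The sequence 0 → A/(x^m) → A/(x^{m+N}) → A/(x^N) ⊕ A/(x^{m+N}, y^N) → A/(x^N, y^N) → 0 is exact, where the first map is multiplication by x^N y^N, the second map sends f to (f mod (x^N), f mod (x^{m+N}, y^N)), and the third map sends (f, g) to (f − g) mod (x^N, y^N). -/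
/-!
All ideals involved are monomial ideals, so membership is read off the support of a polynomial
(`MvPolynomial.mem_ideal_span_monomial_image`). Injectivity is cancellation of the monomial
`x^N y^N`. Exactness at `A/(x^{m+N})` is the identity
`(x^N) ∩ (x^{m+N}, y^N) = (x^N y^N) + (x^{m+N})`, proved by splitting a polynomial into the
monomials of `y`-degree `≥ N` and the others. The rest holds for any submodules
`P ≤ Q₁ ∩ Q₂` of a module `M`: the sequence `M/P → M/Q₁ × M/Q₂ → M/(Q₁ + Q₂) → 0` is exact.
-/

open MvPolynomial

variable (R : Type*) [CommRing R]

/-- `x` in `A = R[x,y]`. -/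
noncomputable abbrev Xv : MvPolynomial (Fin 2) R := X 0
/-- `y` in `A = R[x,y]`. -/
noncomputable abbrev Yv : MvPolynomial (Fin 2) R := X 1

/-- Multiplication by `x^N y^N`, as a map `A/(x^m) → A/(x^{m+N})`. -/
noncomputable def mulXYQ (m N : ℕ) :
    (MvPolynomial (Fin 2) R ⧸ Ideal.span {Xv R ^ m}) →ₗ[MvPolynomial (Fin 2) R]
      (MvPolynomial (Fin 2) R ⧸ Ideal.span {Xv R ^ (m + N)}) :=
  Submodule.mapQ _ _
    (LinearMap.toSpanSingleton (MvPolynomial (Fin 2) R) (MvPolynomial (Fin 2) R)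
      (Xv R ^ N * Yv R ^ N))
    (by
      rw [Ideal.span_le]
      rintro z rfl
      simp only [Submodule.mem_comap, LinearMap.toSpanSingleton_apply, smul_eq_mul,
        SetLike.mem_coe]
      exact Ideal.mem_span_singleton.mpr ⟨Yv R ^ N, by rw [pow_add]; ring⟩)

/-- The map `A/(x^{m+N}) → A/(x^N) ⊕ A/(x^{m+N}, y^N)` given by the two natural
quotient maps. -/
noncomputable def restrictPairQ (m N : ℕ) :
    (MvPolynomial (Fin 2) R ⧸ Ideal.span {Xv R ^ (m + N)}) →ₗ[MvPolynomial (Fin 2) R]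
      (MvPolynomial (Fin 2) R ⧸ Ideal.span {Xv R ^ N}) ×
        (MvPolynomial (Fin 2) R ⧸ Ideal.span {Xv R ^ (m + N), Yv R ^ N}) :=
  LinearMap.prod
    (Submodule.mapQ _ _ LinearMap.id
      (by
        rw [Submodule.comap_id, Ideal.span_le]
        rintro z rfl
        exact SetLike.mem_coe.mpr
          (Ideal.mem_span_singleton.mpr (pow_dvd_pow _ (Nat.le_add_left N m)))))
    (Submodule.mapQ _ _ LinearMap.id
      (by
        rw [Submodule.comap_id, Ideal.span_le]
        rintro z rfl
        exact Ideal.subset_span (by simp)))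

/-- The difference map `A/(x^N) ⊕ A/(x^{m+N}, y^N) → A/(x^N, y^N)`, `(f, g) ↦ f - g`. -/
noncomputable def diffPairQ (m N : ℕ) :
    ((MvPolynomial (Fin 2) R ⧸ Ideal.span {Xv R ^ N}) ×
        (MvPolynomial (Fin 2) R ⧸ Ideal.span {Xv R ^ (m + N), Yv R ^ N}))
      →ₗ[MvPolynomial (Fin 2) R]
      (MvPolynomial (Fin 2) R ⧸ Ideal.span {Xv R ^ N, Yv R ^ N}) :=
  (Submodule.mapQ _ _ LinearMap.id
      (by
        rw [Submodule.comap_id, Ideal.span_le]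
        rintro z rfl
        exact Ideal.subset_span (by simp))).comp (LinearMap.fst _ _ _)
  - (Submodule.mapQ _ _ LinearMap.id
      (by
        rw [Submodule.comap_id, Ideal.span_le]
        intro z hz
        simp only [Set.mem_insert_iff, Set.mem_singleton_iff] at hz
        rcases hz with rfl | rfl
        · refine SetLike.mem_coe.mpr ?_
          rw [pow_add]
          exact Ideal.mul_mem_left _ _ (Ideal.subset_span (by simp))
        · exact Ideal.subset_span (by simp))).comp (LinearMap.snd _ _ _)

theorem Finsupp.single_add_single_le_iff {σ : Type*} {i j : σ} (hij : i ≠ j) {a b : ℕ}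
    {d : σ →₀ ℕ} : Finsupp.single i a + Finsupp.single j b ≤ d ↔ a ≤ d i ∧ b ≤ d j := by
  refine ⟨fun h => ⟨by simpa [hij.symm] using h i, by simpa [hij] using h j⟩, ?_⟩
  rintro ⟨hi, hj⟩ k
  by_cases hki : k = i
  · subst hki; simpa [hij.symm]
  · by_cases hkj : k = j
    · subst hkj; simpa [hki]
    · simp [Ne.symm hki, Ne.symm hkj]

namespace MvPolynomial

variable {R} {σ : Type*} {f w : MvPolynomial σ R} {i j : σ} {a b c : ℕ}

theorem mem_span_X_pow_iff : f ∈ Ideal.span {X i ^ a} ↔ ∀ d ∈ f.support, a ≤ d i := by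
  simpa [X_pow_eq_monomial, Finsupp.single_le_iff] using
    mem_ideal_span_monomial_image (x := f) (s := {Finsupp.single i a})

theorem mem_span_X_pow_pair_iff :
    f ∈ Ideal.span {X i ^ a, X j ^ b} ↔ ∀ d ∈ f.support, a ≤ d i ∨ b ≤ d j := by
  simpa [X_pow_eq_monomial, Finsupp.single_le_iff, Set.image_pair] using
    mem_ideal_span_monomial_image (x := f) (s := {Finsupp.single i a, Finsupp.single j b})

theorem X_pow_mul_X_pow_eq_monomial :
    (X i ^ a * X j ^ b : MvPolynomial σ R) =
      monomial (Finsupp.single i a + Finsupp.single j b) 1 := by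
  rw [X_pow_eq_monomial, X_pow_eq_monomial, monomial_mul, one_mul]

theorem mem_span_X_pow_mul_X_pow_iff (hij : i ≠ j) :
    f ∈ Ideal.span {X i ^ a * X j ^ b} ↔ ∀ d ∈ f.support, a ≤ d i ∧ b ≤ d j := by
  simpa [X_pow_mul_X_pow_eq_monomial, Finsupp.single_add_single_le_iff hij] using
    mem_ideal_span_monomial_image (x := f) (s := {Finsupp.single i a + Finsupp.single j b})

theorem mem_span_X_pow_of_X_pow_mul_X_pow_mul_mem (hij : i ≠ j)
    (h : X i ^ a * X j ^ b * w ∈ Ideal.span {X i ^ (c + a)}) : w ∈ Ideal.span {X i ^ c} := by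
  rw [mem_span_X_pow_iff] at h ⊢
  intro d hd
  have hshift :
      Finsupp.single i a + Finsupp.single j b + d ∈ (X i ^ a * X j ^ b * w).support := by
    rwa [X_pow_mul_X_pow_eq_monomial, mem_support_iff, coeff_monomial_mul, one_mul,
      ← mem_support_iff]
  simpa [hij.symm, add_comm a] using h _ hshift

theorem span_X_pow_inf_span_X_pow_pair (hij : i ≠ j) :
    Ideal.span {X i ^ a} ⊓ Ideal.span {X i ^ (c + a), X j ^ b} =
      Ideal.span {X i ^ a * X j ^ b} ⊔
        (Ideal.span {X i ^ (c + a)} : Ideal (MvPolynomial σ R)) := by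
  classical
  apply le_antisymm
  · rintro f ⟨hx, hxy⟩
    rw [SetLike.mem_coe, mem_span_X_pow_iff] at hx
    rw [SetLike.mem_coe, mem_span_X_pow_pair_iff] at hxy
    rw [← support_sum_monomial_coeff f,
      ← Finset.sum_filter_add_sum_filter_not f.support (fun d => b ≤ d j)]
    refine Submodule.add_mem_sup (Ideal.sum_mem _ fun d hd => ?_) (Ideal.sum_mem _ fun d hd => ?_)
      <;> rw [Finset.mem_filter] at hd
    · rw [mem_span_X_pow_mul_X_pow_iff hij]
      intro e he
      obtain rfl := Finset.mem_singleton.1 (support_monomial_subset he)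
      exact ⟨hx _ hd.1, hd.2⟩
    · rw [mem_span_X_pow_iff]
      intro e he
      obtain rfl := Finset.mem_singleton.1 (support_monomial_subset he)
      exact (hxy _ hd.1).resolve_right hd.2
  · refine sup_le (le_inf ?_ ?_) (le_inf ?_ ?_)
    · exact Ideal.span_singleton_le_span_singleton.2 (dvd_mul_right _ _)
    · exact (Ideal.span_singleton_le_iff_mem _).2 (Ideal.mem_span_pair.2 ⟨0, X i ^ a, by ring⟩)
    · exact Ideal.span_singleton_le_span_singleton.2 (pow_dvd_pow _ (Nat.le_add_left a c))
    · exact Ideal.span_mono (by simp)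

end MvPolynomial

namespace Submodule

variable {S M M' : Type*} [Ring S] [AddCommGroup M] [Module S M] [AddCommGroup M'] [Module S M']
  {P Q₁ Q₂ T : Submodule S M}

theorem mapQ_injective_of_comap_le {P' : Submodule S M'} (f : M' →ₗ[S] M) (h : P' ≤ P.comap f)
    (hf : P.comap f ≤ P') : Function.Injective (P'.mapQ P f h) := by
  rw [← LinearMap.ker_eq_bot, ker_mapQ, le_antisymm hf h, mkQ_map_self]

theorem exact_mapQ_prod_factor {P' : Submodule S M'} (f : M' →ₗ[S] M) (h : P' ≤ P.comap f)
    (h₁ : P ≤ Q₁) (h₂ : P ≤ Q₂) (hker : Q₁ ⊓ Q₂ = LinearMap.range f ⊔ P) :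
    Function.Exact (P'.mapQ P f h) ((factor h₁).prod (factor h₂)) := by
  rw [LinearMap.exact_iff, LinearMap.ker_prod, ker_mapQ, ker_mapQ, range_mapQ,
    comap_id, comap_id]
  apply comap_injective_of_surjective (mkQ_surjective P)
  rw [comap_inf, comap_map_mkQ, comap_map_mkQ, comap_map_mkQ, sup_eq_right.2 h₁,
    sup_eq_right.2 h₂, hker, sup_comm]

theorem exact_prod_factor_sub_factor (h₁ : P ≤ Q₁) (h₂ : P ≤ Q₂) (k₁ : Q₁ ≤ T) (k₂ : Q₂ ≤ T)
    (hT : T ≤ Q₁ ⊔ Q₂) :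
    Function.Exact ((factor h₁).prod (factor h₂))
      ((factor k₁).comp (LinearMap.fst S _ (M ⧸ Q₂)) -
        (factor k₂).comp (LinearMap.snd S (M ⧸ Q₁) _)) := by
  rintro ⟨u, v⟩
  obtain ⟨a, rfl⟩ := Quotient.mk_surjective _ u
  obtain ⟨b, rfl⟩ := Quotient.mk_surjective _ v
  simp only [LinearMap.sub_apply, LinearMap.comp_apply, LinearMap.fst_apply,
    LinearMap.snd_apply, mapQ_apply, LinearMap.id_apply, ← Quotient.mk_sub,
    Quotient.mk_eq_zero]
  constructor
  · intro hab
    obtain ⟨q₁, hq₁, q₂, hq₂, hq⟩ := mem_sup.1 (hT hab)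
    refine ⟨Quotient.mk (a - q₁), ?_⟩
    simp only [LinearMap.prod_apply, Function.prod, mapQ_apply, LinearMap.id_apply,
      Prod.mk.injEq, Quotient.eq]
    refine ⟨by simpa using neg_mem hq₁, ?_⟩
    rwa [show a - q₁ - b = q₂ by rw [sub_right_comm, ← hq]; abel]
  · rintro ⟨w, hw⟩
    obtain ⟨c, rfl⟩ := Quotient.mk_surjective _ w
    simp only [LinearMap.prod_apply, Function.prod, mapQ_apply, LinearMap.id_apply,
      Prod.mk.injEq, Quotient.eq] at hw
    simpa using sub_mem (k₂ hw.2) (k₁ hw.1)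

theorem surjective_factor_comp_fst_sub (k₁ : Q₁ ≤ T) (k₂ : Q₂ ≤ T) :
    Function.Surjective
      ((factor k₁).comp (LinearMap.fst S _ (M ⧸ Q₂)) -
        (factor k₂).comp (LinearMap.snd S (M ⧸ Q₁) _)) :=
  fun t => (factor_surjective k₁ t).elim fun u hu => ⟨(u, 0), by simpa using hu⟩

end Submodule

theorem toy_model_resolution_exact (m N : ℕ) :
    Function.Injective (mulXYQ R m N) ∧
    Function.Exact (mulXYQ R m N) (restrictPairQ R m N) ∧
    Function.Exact (restrictPairQ R m N) (diffPairQ R m N) ∧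
    Function.Surjective (diffPairQ R m N) := by
  have hxy : (0 : Fin 2) ≠ 1 := by decide
  refine ⟨Submodule.mapQ_injective_of_comap_le _ _ fun w hw => ?_,
    Submodule.exact_mapQ_prod_factor _ _ _ _ ?_,
    Submodule.exact_prod_factor_sub_factor _ _ _ _ ?_,
    Submodule.surjective_factor_comp_fst_sub _ _⟩
  · exact mem_span_X_pow_of_X_pow_mul_X_pow_mul_mem hxy (by simpa [mul_comm w] using hw)
  · rw [LinearMap.range_toSpanSingleton]
    exact span_X_pow_inf_span_X_pow_pair hxy
  · rw [Ideal.span_insert]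
    exact sup_le_sup_left (Ideal.span_mono (by simp)) _
end

section
/- Let g ≥ 1, let p ≥ 2 be an integer, and let ε : ℤ/gℤ → {+1, −1} be any sign function. Then there exist strictly positive real numbers c_0, ..., c_{g−1} such that ε(i)·c_i + p·c_{i+1} = 1 for all i ∈ ℤ/gℤ (indices taken cyclically). Equivalently, the all-ones vector (1,...,1) ∈ ℝ^g lies in the strictly positive cone spanned by the vectors v_i = p·e_{i−1} + ε(i)·e_i. -/
/-!
The coefficients are the solution of the linear system `ε i * c i + p * c (i + 1) = 1`.
Since `p > 1 ≥ |ε i|`, the shift term dominates, so a maximum-modulus argument around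
the cycle shows that the system is injective, hence solvable, and that its solution
satisfies `|c i| ≤ 1 / (p - 1) ≤ 1`. Then `p * c (i + 1) ≥ 1 - |c i| ≥ 0`, and strict
positivity follows because `|c i| < 1` propagates from `i` to `i + 1`: either every `|c i|`
is below `1`, or every `|c i|` equals `1`, and in both cases `c > 0`.
-/

namespace ZMod

theorem forall_of_imp_add_one {n : ℕ} [NeZero n] {P : ZMod n → Prop}
    (h : ∀ i, P i → P (i + 1)) {j : ZMod n} (hj : P j) (k : ZMod n) : P k := by
  have hjm : ∀ m : ℕ, P (j + m) := by
    intro m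
    induction m with
    | zero => simpa using hj
    | succ m ih => simpa [add_assoc] using h _ ih
  simpa using hjm (k - j).val

theorem sub_one_mul_abs_le {n : ℕ} [NeZero n] {c : ZMod n → ℝ} {q a : ℝ} (hq : 1 ≤ q)
    (h : ∀ i, q * |c (i + 1)| ≤ a + |c i|) (i : ZMod n) : (q - 1) * |c i| ≤ a := by
  obtain ⟨j, hj⟩ := Finite.exists_max fun i => |c i|
  have hstep := h (j - 1)
  rw [sub_add_cancel] at hstep
  nlinarith [hj i, hj (j - 1)]

end ZMod

section CyclicSystem

variable {n : ℕ} {ε : ZMod n → ℝ} {p : ℝ}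

variable (ε p) in
def cyclicSystem : (ZMod n → ℝ) →ₗ[ℝ] ZMod n → ℝ where
  toFun c i := ε i * c i + p * c (i + 1)
  map_add' _ _ := by ext; simp only [Pi.add_apply]; ring
  map_smul' _ _ := by ext; simp only [Pi.smul_apply, smul_eq_mul, RingHom.id_apply]; ring

theorem mul_eq_sub_of_cyclicSystem_eq {c b : ZMod n → ℝ} (hc : cyclicSystem ε p c = b)
    (i : ZMod n) : p * c (i + 1) = b i - ε i * c i := by
  rw [← hc]
  simp only [cyclicSystem, LinearMap.coe_mk, AddHom.coe_mk]
  ring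

theorem sub_abs_le_mul_of_cyclicSystem_eq (hε : ∀ i, |ε i| ≤ 1) {c b : ZMod n → ℝ}
    (hc : cyclicSystem ε p c = b) (i : ZMod n) : b i - |c i| ≤ p * c (i + 1) := by
  have hεc : ε i * c i ≤ |c i| := calc
    ε i * c i ≤ |ε i * c i| := le_abs_self _
    _ = |ε i| * |c i| := abs_mul _ _
    _ ≤ |c i| := mul_le_of_le_one_left (abs_nonneg _) (hε i)
  linarith [mul_eq_sub_of_cyclicSystem_eq hc i]

theorem mul_abs_le_add_abs_of_cyclicSystem_eq (hε : ∀ i, |ε i| ≤ 1) (hp : 0 ≤ p)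
    {c b : ZMod n → ℝ} (hc : cyclicSystem ε p c = b) (i : ZMod n) :
    p * |c (i + 1)| ≤ |b i| + |c i| := calc
  p * |c (i + 1)| = |b i - ε i * c i| := by
    rw [← mul_eq_sub_of_cyclicSystem_eq hc, abs_mul, abs_of_nonneg hp]
  _ ≤ |b i| + |ε i| * |c i| := by rw [← abs_mul]; exact abs_sub _ _
  _ ≤ |b i| + |c i| := by gcongr; exact mul_le_of_le_one_left (abs_nonneg _) (hε i)

theorem cyclicSystem_injective [NeZero n] (hε : ∀ i, |ε i| ≤ 1) (hp : 1 < p) :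
    Function.Injective (cyclicSystem ε p) := by
  refine (injective_iff_map_eq_zero _).mpr fun c hc => funext fun i => ?_
  have hstep (i : ZMod n) : p * |c (i + 1)| ≤ 0 + |c i| := by
    simpa using mul_abs_le_add_abs_of_cyclicSystem_eq hε (by linarith) hc i
  have h : (p - 1) * |c i| ≤ 0 := ZMod.sub_one_mul_abs_le hp.le hstep i
  exact abs_nonpos_iff.mp (nonpos_of_mul_nonpos_right h (by linarith))

theorem cyclicSystem_surjective [NeZero n] (hε : ∀ i, |ε i| ≤ 1) (hp : 1 < p) :
    Function.Surjective (cyclicSystem ε p) :=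
  LinearMap.injective_iff_surjective.mp (cyclicSystem_injective hε hp)

theorem pos_of_cyclicSystem_eq_one [NeZero n] (hε : ∀ i, |ε i| ≤ 1) (hp : 2 ≤ p)
    {c : ZMod n → ℝ} (hc : cyclicSystem ε p c = 1) (i : ZMod n) : 0 < c i := by
  have hstep (i : ZMod n) : p * |c (i + 1)| ≤ 1 + |c i| := by
    simpa using mul_abs_le_add_abs_of_cyclicSystem_eq hε (by linarith) hc i
  have hlower (i : ZMod n) : 1 - |c (i - 1)| ≤ p * c i := by
    simpa using sub_abs_le_mul_of_cyclicSystem_eq hε hc (i - 1)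
  have hle_one (i : ZMod n) : |c i| ≤ 1 := by
    nlinarith [ZMod.sub_one_mul_abs_le (by linarith) hstep i, abs_nonneg (c i)]
  by_cases hsmall : ∃ j, |c j| < 1
  · obtain ⟨j, hj⟩ := hsmall
    have hall : ∀ k, |c k| < 1 := ZMod.forall_of_imp_add_one
      (fun k hk => by nlinarith [hstep k]) hj
    nlinarith [hlower i, hall (i - 1)]
  · push Not at hsmall
    have habs : |c i| = 1 := le_antisymm (hle_one i) (hsmall i)
    have hnonneg : 0 ≤ c i := by nlinarith [hlower i, hle_one (i - 1)]
    rw [← abs_of_nonneg hnonneg, habs]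
    exact one_pos

end CyclicSystem

/-- For any sign function `ε : ℤ/gℤ → {±1}` and any `p ≥ 2`, there exist strictly
positive reals `c_i` with `ε(i)·c_i + p·c_{i+1} = 1` for all `i`; i.e. the all-ones
vector lies in the strictly positive cone spanned by the vectors `p·e_{i-1} + ε(i)·e_i`. -/
theorem ones_in_positive_cone (g : ℕ) [NeZero g] (p : ℕ) (hp : 2 ≤ p)
    (ε : ZMod g → ℝ) (hε : ∀ i, ε i = 1 ∨ ε i = -1) :
    ∃ c : ZMod g → ℝ, (∀ i, 0 < c i) ∧ ∀ i, ε i * c i + (p : ℝ) * c (i + 1) = 1 := by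
  have hε_abs : ∀ i, |ε i| ≤ 1 := fun i => by rcases hε i with h | h <;> simp [h]
  have hp_real : (2 : ℝ) ≤ p := by exact_mod_cast hp
  obtain ⟨c, hc⟩ := cyclicSystem_surjective hε_abs (by linarith) 1
  exact ⟨c, pos_of_cyclicSystem_eq_one hε_abs hp_real hc, fun i => congrFun hc i⟩
end
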